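/- The non-zero eigenvalues of Im V² = (V² − V*²)/(2i) are exactly ±√3/12. -/

import Mathlib

/-!
Since `(V f)(x) = ∫_{t ≤ x} f` and `(V* f)(t) = ∫_{x > t} f` (up to null sets), Fubini gives
`V + V* = P`, the orthogonal projection onto the constants. With `V 1 = x` this turns
`V² - V*² = V² - (P - V)²` into the rank-two operator `f ↦ ⟪1, f⟫ x - ⟪x, f⟫ 1`. Its range is
spanned by `1` and `x`, whose Gram matrix is `[[1, 1/2], [1/2, 1/3]]`; on that plane `Im V²` has
characteristic polynomial `μ² - 1/48`.
-/

open MeasureTheory Complex ContinuousLinearMap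

noncomputable section

abbrev E : Type := Lp ℂ 2 (volume.restrict (Set.Icc (0:ℝ) 1))

def IsVolterra (V : E →L[ℂ] E) : Prop :=
  ∀ f : E, ∀ᵐ x ∂(volume.restrict (Set.Icc (0:ℝ) 1)),
    (V f : ℝ → ℂ) x = ∫ t in (0:ℝ)..x, (f : ℝ → ℂ) t

open Set InnerProductSpace
open scoped InnerProductSpace ComplexConjugate

theorem integral_mul_setIntegral_Iic_add_integral_setIntegral_Iio_mul {𝕜 : Type*} [RCLike 𝕜]
    {μ : Measure ℝ} [SFinite μ] {f g : ℝ → 𝕜} (hf : Integrable f μ) (hg : Integrable g μ) :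
    ∫ x, g x * ∫ t in Iic x, f t ∂μ ∂μ + ∫ t, (∫ x in Iio t, g x ∂μ) * f t ∂μ =
      (∫ x, g x ∂μ) * ∫ t, f t ∂μ := by
  set S : Set (ℝ × ℝ) := {p | p.2 ≤ p.1}
  have hS : MeasurableSet S := measurableSet_le measurable_snd measurable_fst
  have hprod : Integrable (fun p : ℝ × ℝ => g p.1 * f p.2) (μ.prod μ) := hg.mul_prod hf
  have hlower : ∫ x, g x * ∫ t in Iic x, f t ∂μ ∂μ = ∫ p in S, g p.1 * f p.2 ∂μ.prod μ := by
    rw [← integral_indicator hS, integral_prod _ (hprod.indicator hS)]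
    congr 1 with x
    rw [← integral_indicator measurableSet_Iic, ← integral_const_mul]
    congr 1 with t
    by_cases h : t ≤ x <;> simp [S, h]
  have hupper : ∫ t, (∫ x in Iio t, g x ∂μ) * f t ∂μ = ∫ p in Sᶜ, g p.1 * f p.2 ∂μ.prod μ := by
    rw [← integral_indicator hS.compl, integral_prod_symm _ (hprod.indicator hS.compl)]
    congr 1 with t
    rw [← integral_indicator measurableSet_Iio, ← integral_mul_const]
    congr 1 with x
    by_cases h : x < t <;> simp [S, h]
  rw [hlower, hupper, integral_add_compl hS hprod, integral_prod_mul]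

section GramOneHalfOneThird

variable {F : Type*} [NormedAddCommGroup F] [InnerProductSpace ℂ F] {a b : F}
  (haa : ⟪a, a⟫_ℂ = 1) (hab : ⟪a, b⟫_ℂ = 2⁻¹) (hbb : ⟪b, b⟫_ℂ = 3⁻¹)
include haa hab hbb

theorem sq_eq_of_hasEigenvalue_smul_rankOne_sub {μ : ℂ} (hμ : μ ≠ 0)
    (h : Module.End.HasEigenvalue
      (((2 * I)⁻¹ • (rankOne ℂ b a - rankOne ℂ a b) : F →L[ℂ] F) : F →ₗ[ℂ] F) μ) :
    μ ^ 2 = 48⁻¹ := by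
  have hba : ⟪b, a⟫_ℂ = 2⁻¹ := by rw [← inner_conj_symm, hab, map_inv₀, Complex.conj_ofNat]
  obtain ⟨w, hw⟩ := h.exists_hasEigenvector
  have hTw : (2 * I)⁻¹ • (⟪a, w⟫_ℂ • b - ⟪b, w⟫_ℂ • a) = μ • w := by
    simpa using hw.apply_eq_smul
  set k : ℂ := (2 * I)⁻¹
  have hk : k ^ 2 = -4⁻¹ := by simp [k, mul_pow]; norm_num
  have ha := congrArg (⟪a, ·⟫_ℂ) hTw
  have hb := congrArg (⟪b, ·⟫_ℂ) hTw
  simp only [inner_smul_right, inner_sub_right, haa, hab, hba, hbb] at ha hb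
  set c := ⟪a, w⟫_ℂ
  set d := ⟪b, w⟫_ℂ
  -- Cramer's rule: the linear system for `(c, d)` has determinant `μ² - 1/48`
  have hc : (μ ^ 2 - 48⁻¹) * c = 0 := by
    linear_combination (-k/2 - μ) * ha + k * hb - c / 12 * hk
  have hd : (μ ^ 2 - 48⁻¹) * d = 0 := by
    linear_combination (-k/3) * ha + (k/2 - μ) * hb - d / 12 * hk
  by_contra hne
  have hdet : μ ^ 2 - 48⁻¹ ≠ 0 := sub_ne_zero.2 hne
  rw [(mul_eq_zero.1 hc).resolve_left hdet, (mul_eq_zero.1 hd).resolve_left hdet] at hTw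
  exact hw.2 ((smul_eq_zero.1 (by simpa using hTw.symm)).resolve_left hμ)

theorem hasEigenvalue_smul_rankOne_sub_of_sq_eq {μ : ℂ} (hμ : μ ^ 2 = 48⁻¹) :
    Module.End.HasEigenvalue
      (((2 * I)⁻¹ • (rankOne ℂ b a - rankOne ℂ a b) : F →L[ℂ] F) : F →ₗ[ℂ] F) μ := by
  have hba : ⟪b, a⟫_ℂ = 2⁻¹ := by rw [← inner_conj_symm, hab, map_inv₀, Complex.conj_ofNat]
  set w : F := (2 * I * μ - 2⁻¹) • a + b
  have haw : ⟪a, w⟫_ℂ = 2 * I * μ := by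
    simp only [w, inner_add_right, inner_smul_right, haa, hab]; ring
  have hbw : ⟪b, w⟫_ℂ = I * μ + 12⁻¹ := by
    simp only [w, inner_add_right, inner_smul_right, hba, hbb]; ring
  refine Module.End.hasEigenvalue_of_hasEigenvector (x := w) ⟨?_, ?_⟩
  · rw [Module.End.mem_eigenspace_iff]
    simp only [coe_coe, smul_apply, sub_apply, rankOne_apply, haw, hbw]
    rw [mul_inv, inv_I]
    match_scalars
    · linear_combination -μ * I_sq
    · linear_combination (μ / 2) * I_sq - 2 * I * hμ
  · intro hw0
    have hμ0 : 2 * I * μ = 0 := by rw [← haw, hw0, inner_zero_right]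
    simp only [mul_eq_zero, two_ne_zero, I_ne_zero, false_or] at hμ0
    norm_num [hμ0] at hμ

end GramOneHalfOneThird

local notation "μ₀₁" => volume.restrict (Set.Icc (0:ℝ) 1)

theorem intervalIntegral_eq_setIntegral_Iic {F : Type*} [NormedAddCommGroup F] [NormedSpace ℝ F]
    (f : ℝ → F) {x : ℝ} (hx : x ∈ Icc (0:ℝ) 1) :
    ∫ t in (0:ℝ)..x, f t = ∫ t in Iic x, f t ∂μ₀₁ := by
  have hIcc : Iic x ∩ Icc 0 1 = Icc 0 x := by
    ext t; simp only [mem_inter_iff, mem_Iic, mem_Icc]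
    constructor
    · rintro ⟨htx, ht0, -⟩; exact ⟨ht0, htx⟩
    · rintro ⟨ht0, htx⟩; exact ⟨htx, ht0, htx.trans hx.2⟩
  rw [intervalIntegral.integral_of_le hx.1, ← integral_Icc_eq_integral_Ioc,
    Measure.restrict_restrict measurableSet_Iic, hIcc]

theorem memLp_pow_Icc (n : ℕ) : MemLp (fun x : ℝ => (x : ℂ) ^ n) 2 μ₀₁ := by
  refine MemLp.of_bound (by fun_prop) 1 ?_
  filter_upwards [ae_restrict_mem measurableSet_Icc] with x hx
  simpa [abs_of_nonneg hx.1] using pow_le_one₀ hx.1 hx.2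

def monomialL2 (n : ℕ) : E := (memLp_pow_Icc n).toLp _

theorem coeFn_monomialL2 (n : ℕ) : (monomialL2 n : ℝ → ℂ) =ᵐ[μ₀₁] fun x => (x : ℂ) ^ n :=
  (memLp_pow_Icc n).coeFn_toLp

theorem inner_monomialL2 (m n : ℕ) :
    ⟪monomialL2 m, monomialL2 n⟫_ℂ = ((m + n + 1 : ℕ) : ℂ)⁻¹ := by
  calc ⟪monomialL2 m, monomialL2 n⟫_ℂ = ∫ x in (0:ℝ)..1, ((x ^ (m + n) : ℝ) : ℂ) := by
        rw [L2.inner_def, intervalIntegral.integral_of_le zero_le_one,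
          ← integral_Icc_eq_integral_Ioc]
        refine integral_congr_ae ?_
        filter_upwards [coeFn_monomialL2 m, coeFn_monomialL2 n] with x hm hn
        simp [hm, hn, pow_add, mul_comm]
    _ = _ := by rw [intervalIntegral.integral_ofReal, integral_pow]; simp

theorem inner_monomialL2_zero_self : ⟪monomialL2 0, monomialL2 0⟫_ℂ = 1 := by
  rw [inner_monomialL2]; norm_num

namespace IsVolterra

variable {V : E →L[ℂ] E} (hV : IsVolterra V)
include hV

theorem coeFn_apply (f : E) : (V f : ℝ → ℂ) =ᵐ[μ₀₁] fun x => ∫ t in Iic x, (f : ℝ → ℂ) t ∂μ₀₁ := by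
  filter_upwards [hV f, ae_restrict_mem measurableSet_Icc] with x hVf hx
  rw [hVf, intervalIntegral_eq_setIntegral_Iic _ hx]

theorem inner_apply_add_inner_apply (f g : E) :
    ⟪g, V f⟫_ℂ + ⟪V g, f⟫_ℂ = ⟪g, monomialL2 0⟫_ℂ * ⟪monomialL2 0, f⟫_ℂ := by
  have hg : ⟪g, monomialL2 0⟫_ℂ = ∫ x, conj ((g : ℝ → ℂ) x) ∂μ₀₁ := by
    rw [L2.inner_def]; refine integral_congr_ae ?_
    filter_upwards [coeFn_monomialL2 0] with x hx; simp [hx]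
  have hf : ⟪monomialL2 0, f⟫_ℂ = ∫ t, (f : ℝ → ℂ) t ∂μ₀₁ := by
    rw [L2.inner_def]; refine integral_congr_ae ?_
    filter_upwards [coeFn_monomialL2 0] with x hx; simp [hx]
  have hVf : ⟪g, V f⟫_ℂ = ∫ x, conj ((g : ℝ → ℂ) x) * ∫ t in Iic x, (f : ℝ → ℂ) t ∂μ₀₁ ∂μ₀₁ := by
    rw [L2.inner_def]; refine integral_congr_ae ?_
    filter_upwards [hV.coeFn_apply f] with x hx
    rw [RCLike.inner_apply', hx]
  have hVg : ⟪V g, f⟫_ℂ = ∫ t, (∫ x in Iio t, conj ((g : ℝ → ℂ) x) ∂μ₀₁) * (f : ℝ → ℂ) t ∂μ₀₁ := by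
    rw [L2.inner_def]; refine integral_congr_ae ?_
    filter_upwards [hV.coeFn_apply g] with t ht
    rw [RCLike.inner_apply', ht, integral_Iic_eq_integral_Iio, integral_conj]
  rw [hg, hf, hVf, hVg]
  exact integral_mul_setIntegral_Iic_add_integral_setIntegral_Iio_mul
    ((Lp.memLp f).integrable one_le_two)
    ((LinearIsometryEquiv.integrable_comp_iff RCLike.conjLIE).2
      ((Lp.memLp g).integrable one_le_two))

theorem apply_monomialL2 (n : ℕ) :
    V (monomialL2 n) = ((n + 1 : ℕ) : ℂ)⁻¹ • monomialL2 (n + 1) := by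
  apply Lp.ext
  filter_upwards [hV.coeFn_apply (monomialL2 n),
    Lp.coeFn_smul ((n + 1 : ℕ) : ℂ)⁻¹ (monomialL2 (n + 1)), coeFn_monomialL2 (n + 1), ae_restrict_mem measurableSet_Icc] with x hVx hsmul hx1 hx
  have hpow : ∫ t in Iic x, (monomialL2 n : ℝ → ℂ) t ∂μ₀₁ = ∫ t in (0:ℝ)..x, ((t ^ n : ℝ) : ℂ) := by
    rw [intervalIntegral_eq_setIntegral_Iic _ hx]
    refine integral_congr_ae ?_
    filter_upwards [ae_restrict_of_ae (coeFn_monomialL2 n)] with t ht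
    simp [ht]
  rw [hVx, hsmul, Pi.smul_apply, hx1, hpow, intervalIntegral.integral_ofReal, integral_pow]
  push_cast
  ring

theorem adjoint_eq : adjoint V = rankOne ℂ (monomialL2 0) (monomialL2 0) - V := by
  ext1 f
  refine ext_inner_left ℂ fun g => ?_
  rw [adjoint_inner_right, sub_apply, rankOne_apply, inner_sub_right, inner_smul_right]
  linear_combination hV.inner_apply_add_inner_apply f g

theorem sq_sub_adjoint_sq :
    V ^ 2 - adjoint (V ^ 2) =
      rankOne ℂ (monomialL2 1) (monomialL2 0) - rankOne ℂ (monomialL2 0) (monomialL2 1) := by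
  have hV0 : V (monomialL2 0) = monomialL2 1 := by simpa using hV.apply_monomialL2 0
  have hinner (f : E) : ⟪monomialL2 0, V f⟫_ℂ = ⟪monomialL2 0, f⟫_ℂ - ⟪monomialL2 1, f⟫_ℂ := by
    have h := hV.inner_apply_add_inner_apply f (monomialL2 0)
    rw [hV0, inner_monomialL2_zero_self] at h
    linear_combination h
  rw [← star_eq_adjoint, star_pow, star_eq_adjoint, hV.adjoint_eq]
  ext1 f
  simp only [sq, sub_apply, mul_apply_eq_comp, rankOne_apply, map_sub, map_smul,
    hinner, hV0, inner_monomialL2_zero_self, one_smul]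
  module

end IsVolterra

theorem sq_eq_inv_48_iff (μ : ℂ) :
    μ ^ 2 = 48⁻¹ ↔ μ = ((√3 / 12 : ℝ) : ℂ) ∨ μ = -((√3 / 12 : ℝ) : ℂ) := by
  have hroot : ((√3 / 12 : ℝ) : ℂ) ^ 2 = 48⁻¹ := by
    rw [← ofReal_pow, div_pow, Real.sq_sqrt zero_le_three]; norm_num
  rw [← hroot, sq_eq_sq_iff_eq_or_eq_neg]

theorem im_volterra_sq_eigenvalues (V : E →L[ℂ] E) (hV : IsVolterra V) :
    {μ : ℂ | μ ≠ 0 ∧ Module.End.HasEigenvalue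
        ((((2 * Complex.I)⁻¹ : ℂ) • (V ^ 2 - ContinuousLinearMap.adjoint (V ^ 2)) : E →L[ℂ] E) : E →ₗ[ℂ] E) μ} =
      {((Real.sqrt 3 / 12 : ℝ) : ℂ), (-(Real.sqrt 3 / 12 : ℝ) : ℂ)} := by
  have h01 : ⟪monomialL2 0, monomialL2 1⟫_ℂ = 2⁻¹ := by rw [inner_monomialL2]; norm_num
  have h11 : ⟪monomialL2 1, monomialL2 1⟫_ℂ = 3⁻¹ := by rw [inner_monomialL2]; norm_num
  ext μ
  rw [mem_insert_iff, mem_singleton_iff, ← sq_eq_inv_48_iff, mem_ofPred, hV.sq_sub_adjoint_sq]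
  constructor
  · rintro ⟨hμ, h⟩
    exact sq_eq_of_hasEigenvalue_smul_rankOne_sub inner_monomialL2_zero_self h01 h11 hμ h
  · intro h
    refine ⟨?_, hasEigenvalue_smul_rankOne_sub_of_sq_eq inner_monomialL2_zero_self h01 h11 h⟩
    rintro rfl
    norm_num at h
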